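/- arXiv:1712.08787 — 2 statements merged into one kernel-verified Lean document; each statement's English description precedes it below -/
import Mathlib

section
/- For natural numbers n, k ≥ 0, the elementary symmetric polynomial e_k evaluated at the variables 1, q, q^2, ..., q^{n-1} equals q^{binomial(k,2)} · qbinom(n, k), i.e., e_k(1, q, ..., q^{n-1}) = q^{k(k-1)/2} · qbinom(n, k). -/
/-!
Splitting the `(k+1)`-subsets of `{0, …, n}` according to whether they contain `n` gives
`e_{k+1}(1, …, q^n) = e_{k+1}(1, …, q^(n-1)) + q^n e_k(1, …, q^(n-1))`, and `q^binomial(k, 2) [n, k]` obeys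
the same recursion: by the `q`-Pascal rule `[n+1, k+1] = [n, k+1] + q^(n-k) [n, k]`, and
`binomial(k+1, 2) + (n - k) = binomial(k, 2) + n`. Both sides agree at `k = 0` and vanish for `k > n`.
-/

open Finset

/-- The `q`-analogue `[n]_q = 1 + q + ⋯ + q^(n-1)` as a rational function in `q`. -/
noncomputable def qInt (n : ℕ) : RatFunc ℚ := ∑ i ∈ Finset.range n, RatFunc.X ^ i

/-- The `q`-factorial `[n]_q! = [n]_q [n-1]_q ⋯ [1]_q`. -/
noncomputable def qFact : ℕ → RatFunc ℚ
  | 0 => 1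
  | n + 1 => qInt (n + 1) * qFact n

/-- The Gaussian binomial coefficient `[n]_q! / ([k]_q! [n-k]_q!)`. -/
noncomputable def qBinom (n k : ℕ) : RatFunc ℚ :=
  if k ≤ n then qFact n / (qFact k * qFact (n - k)) else 0

/-- The elementary symmetric polynomial `e_k` evaluated at the `n` quantities
`1, q, q², …, q^(n-1)`: the sum over all `k`-element subsets of `{0, …, n-1}`
of `q` raised to the sum of the chosen exponents. -/
noncomputable def eEvalPowers (n k : ℕ) : Polynomial ℚ :=
  ∑ s ∈ (Finset.range n).powersetCard k, Polynomial.X ^ (∑ a ∈ s, a)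


lemma Finset.sum_powersetCard_succ_insert {α β : Type*} [AddCommMonoid β] [DecidableEq α]
    {a : α} {s : Finset α} (ha : a ∉ s) (k : ℕ) (f : Finset α → β) :
    ∑ t ∈ (insert a s).powersetCard (k + 1), f t =
      ∑ t ∈ s.powersetCard (k + 1), f t + ∑ t ∈ s.powersetCard k, f (insert a t) := by
  rw [powersetCard_succ_insert ha, sum_union, sum_image]
  · exact insert_erase_invOn.2.injOn.mono fun t ht ↦ notMem_mono (mem_powersetCard.1 ht).1 ha
  · aesop (add simp [disjoint_left, insert_subset_iff, mem_powersetCard])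

lemma eEvalPowers_zero_right (n : ℕ) : eEvalPowers n 0 = 1 := by
  simp [eEvalPowers]

lemma eEvalPowers_eq_zero_of_lt {n k : ℕ} (h : n < k) : eEvalPowers n k = 0 := by
  rw [eEvalPowers, powersetCard_eq_empty.2 (by simpa using h), sum_empty]

lemma eEvalPowers_succ_succ (n k : ℕ) :
    eEvalPowers (n + 1) (k + 1) = eEvalPowers n (k + 1) + Polynomial.X ^ n * eEvalPowers n k := by
  rw [eEvalPowers, range_add_one, sum_powersetCard_succ_insert notMem_range_self, eEvalPowers,
    eEvalPowers, mul_sum]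
  congr 1
  refine sum_congr rfl fun s hs ↦ ?_
  have hn : n ∉ s := notMem_mono (mem_powersetCard.1 hs).1 notMem_range_self
  rw [sum_insert hn, pow_add]

lemma qInt_add (a b : ℕ) : qInt (a + b) = qInt a + RatFunc.X ^ a * qInt b := by
  simp only [qInt, sum_range_add, mul_sum, pow_add]

lemma qInt_ne_zero {n : ℕ} (hn : n ≠ 0) : qInt n ≠ 0 := by
  have hpoly : qInt n = algebraMap (Polynomial ℚ) (RatFunc ℚ) (∑ i ∈ range n, Polynomial.X ^ i) := by
    simp [qInt, RatFunc.algebraMap_X]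
  rw [hpoly, ne_eq, FaithfulSMul.algebraMap_eq_zero_iff]
  intro h
  simpa [hn] using congrArg (Polynomial.eval 1) h

lemma qFact_ne_zero (n : ℕ) : qFact n ≠ 0 := by
  induction n with
  | zero => exact one_ne_zero
  | succ n ih => exact mul_ne_zero (qInt_ne_zero n.succ_ne_zero) ih

lemma qBinom_of_add_eq {n a b : ℕ} (h : a + b = n) :
    qBinom n a = qFact n / (qFact a * qFact b) := by
  subst h
  rw [qBinom, if_pos (Nat.le_add_right a b), Nat.add_sub_cancel_left]

lemma qBinom_zero_right (n : ℕ) : qBinom n 0 = 1 := by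
  rw [qBinom_of_add_eq (zero_add n), qFact, one_mul, div_self (qFact_ne_zero n)]

lemma qBinom_self (n : ℕ) : qBinom n n = 1 := by
  rw [qBinom_of_add_eq (add_zero n), qFact, mul_one, div_self (qFact_ne_zero n)]

lemma qBinom_eq_zero_of_lt {n k : ℕ} (h : n < k) : qBinom n k = 0 :=
  if_neg h.not_ge

lemma qBinom_succ_succ {n k : ℕ} (h : k ≤ n) :
    qBinom (n + 1) (k + 1) = qBinom n (k + 1) + RatFunc.X ^ (n - k) * qBinom n k := by
  obtain ⟨d, rfl⟩ := Nat.exists_eq_add_of_le h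
  rw [Nat.add_sub_cancel_left]
  cases d with
  | zero => simp [qBinom_self, qBinom_eq_zero_of_lt]
  | succ d =>
    rw [qBinom_of_add_eq (a := k + 1) (b := d + 1) (by ring),
      qBinom_of_add_eq (a := k + 1) (b := d) (by ring), qBinom_of_add_eq (a := k) (b := d + 1) rfl]
    have hsplit : qInt (k + (d + 1) + 1) = qInt (d + 1) + RatFunc.X ^ (d + 1) * qInt (k + 1) := by
      rw [← qInt_add]; ring_nf
    have := qFact_ne_zero k
    have := qFact_ne_zero d
    have := qInt_ne_zero k.succ_ne_zero
    have := qInt_ne_zero d.succ_ne_zero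
    simp only [qFact, hsplit]
    field_simp

theorem esymm_eval_qpowers (n k : ℕ) :
    algebraMap (Polynomial ℚ) (RatFunc ℚ) (eEvalPowers n k)
      = RatFunc.X ^ (k.choose 2) * qBinom n k := by
  induction n generalizing k with
  | zero =>
    rcases k with _ | k
    · simp [eEvalPowers_zero_right, qBinom_zero_right]
    · simp [eEvalPowers_eq_zero_of_lt, qBinom_eq_zero_of_lt]
  | succ n ih =>
    rcases k with _ | k
    · simp [eEvalPowers_zero_right, qBinom_zero_right]
    rcases le_or_gt k n with hkn | hnk
    · obtain ⟨d, rfl⟩ := Nat.exists_eq_add_of_le hkn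
      rw [eEvalPowers_succ_succ, map_add, map_mul, map_pow, RatFunc.algebraMap_X, ih, ih,
        qBinom_succ_succ hkn, Nat.choose_succ_succ', Nat.choose_one_right, Nat.add_sub_cancel_left]
      ring
    · rw [eEvalPowers_eq_zero_of_lt (by omega), qBinom_eq_zero_of_lt (by omega)]
      simp
end

section
/- For every m × n parallelogram polyomino, the number of unit squares strictly enclosed between the red (upper) and green (lower) boundary paths equals the sum of the values of the letters of its area word (where a barred letter x̄ and an unbarred letter x both contribute x). -/
open Finset

/-! ## Lattice-path preliminaries for parallelogram polyominoes.
Paths are lists of booleans: `true` = north step, `false` = east step. -/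

/-- Interlacing `D = (r₁, 1-g₁, r₂, 1-g₂, …)` of the red path and the complemented green path. -/
def interlace : List Bool → List Bool → List Bool
  | [], _ => []
  | _ :: _, [] => []
  | a :: as, b :: bs => a :: (!b) :: interlace as bs

/-- Reading levels along a 0/1 word: on a `true` record the current level and go up one level,
on a `false` go down one level (recording nothing). -/
def levels : List Bool → ℕ → List ℕ
  | [], _ => []
  | true :: rest, l => l :: levels rest (l + 1)
  | false :: rest, l => levels rest (l - 1)

def countTrue (l : List Bool) : ℕ := (l.filter fun b => b = true).length
def countFalse (l : List Bool) : ℕ := (l.filter fun b => b = false).length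

/-- The number of `true`s (north steps) occurring before the `(x+1)`-st `false` (east step):
the height of the path along the column `x ↦ x+1`. -/
def colHeight : List Bool → ℕ → ℕ
  | [], _ => 0
  | true :: rest, k => colHeight rest k + 1
  | false :: _, 0 => 0
  | false :: rest, k + 1 => colHeight rest k

/-- The number of `false`s (east steps) occurring before the `(y+1)`-st `true` (north step). -/
def colX (p : List Bool) (y : ℕ) : ℕ := colHeight (p.map fun b => !b) y

/-- `r` and `g` are the red (upper) and green (lower) boundary paths of an `m × n`
parallelogram polyomino: both go from `(0,0)` to `(m,n)` and the red one stays strictly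
above the green one except at the endpoints. -/
def IsPolyo (m n : ℕ) (r g : List Bool) : Prop :=
  r.length = m + n ∧ g.length = m + n ∧ countTrue r = n ∧ countTrue g = n ∧
    ∀ i : ℕ, 1 ≤ i → i < m + n → countTrue (g.take i) < countTrue (r.take i)

/-- Reduced parallelogram polyomino: the red path stays weakly above the green one. -/
def IsRPolyo (m n : ℕ) (r g : List Bool) : Prop :=
  r.length = m + n ∧ g.length = m + n ∧ countTrue r = n ∧ countTrue g = n ∧
    ∀ i : ℕ, countTrue (g.take i) ≤ countTrue (r.take i)

/-- The area word of a (standard) parallelogram polyomino, as the list of letters of the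
alphabet `0̄ < 1 < 1̄ < 2 < 2̄ < ⋯` encoded by their indices `0, 1, 2, 3, 4, …`.
Barred letters have even index, unbarred letters odd index. -/
def areaWord (r g : List Bool) : List ℕ := levels (interlace r g) 0

/-- The numerical value of the letter with index `j` in the alphabet `0̄ < 1 < 1̄ < 2 < ⋯`. -/
def wval (j : ℕ) : ℕ := (j + 1) / 2

/-- The number of unit cells strictly between the two boundary paths. -/
def cellArea (m : ℕ) (r g : List Bool) : ℕ :=
  ∑ x ∈ Finset.range m, (colHeight r x - colHeight g x)

/-- `area` as the sum of the values of the letters of the area word. -/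
def areaStat (r g : List Bool) : ℕ := ((areaWord r g).map wval).sum

/-- `dinv`: the number of pairs of letters of the area word such that the rightmost letter is
the successor (in the alphabet `0̄ < 1 < 1̄ < ⋯`) of the leftmost one. -/
def dinvStat (r g : List Bool) : ℕ :=
  ((Finset.range (areaWord r g).length ×ˢ Finset.range (areaWord r g).length).filter
    fun p => p.1 < p.2 ∧ (areaWord r g).getD p.2 0 = (areaWord r g).getD p.1 0 + 1).card

/-- A rise of the area word: a barred letter immediately followed by its successor. -/
def IsRise (w : List ℕ) (i : ℕ) : Prop :=
  i + 1 < w.length ∧ w.getD i 0 % 2 = 0 ∧ w.getD (i + 1) 0 = w.getD i 0 + 1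

/-- `underlined area`: the sum of the values of the letters of the area word, ignoring the
(barred) letters at the decorated positions `D`. -/
def uareaStat (r g : List Bool) (D : Finset ℕ) : ℕ :=
  ∑ i ∈ Finset.range (areaWord r g).length \ D, wval ((areaWord r g).getD i 0)

/-! Both sides equal `areaBelow r - areaBelow g`, where `areaBelow p` counts the pairs
(north step, later east step) of `p`, i.e. the cells between `p` and the `x`-axis. For the cells
this is a column-by-column count, valid because the red path dominates the green one. For the
area word, after `k` steps of each path the interlacing is at level `2 d`, with `d` the gap
between the paths on the `k`-th antidiagonal, and the letters still to be read sum to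
`areaBelow r - areaBelow g + d * (east steps left on g)` for the remaining parts of the paths.
Strict domination keeps `d > 0` in the interior, so the truncated subtraction in `levels`
never bites. -/

@[simp] lemma countTrue_nil : countTrue [] = 0 := rfl

@[simp] lemma countFalse_nil : countFalse [] = 0 := rfl

@[simp] lemma countTrue_cons (b : Bool) (l : List Bool) :
    countTrue (b :: l) = countTrue l + b.toNat := by
  cases b <;> simp [countTrue]

@[simp] lemma countFalse_cons (b : Bool) (l : List Bool) :
    countFalse (b :: l) = countFalse l + (!b).toNat := by
  cases b <;> simp [countFalse]

lemma countTrue_add_countFalse (l : List Bool) : countTrue l + countFalse l = l.length := by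
  induction l with
  | nil => rfl
  | cons b l ih => cases b <;> simp <;> omega

def areaBelow : List Bool → ℕ
  | [] => 0
  | true :: l => countFalse l + areaBelow l
  | false :: l => areaBelow l

lemma sum_colHeight_eq_areaBelow (p : List Bool) :
    ∑ x ∈ range (countFalse p), colHeight p x = areaBelow p := by
  induction p with
  | nil => simp [areaBelow]
  | cons b p ih =>
    cases b
    · simp [sum_range_succ', colHeight, areaBelow, ih]
    · simp [colHeight, areaBelow, sum_add_distrib, ih, Nat.add_comm]

lemma countTrue_take_le_colHeight (p : List Bool) {i x : ℕ}
    (h : countFalse (p.take i) ≤ x) : countTrue (p.take i) ≤ colHeight p x := by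
  induction p generalizing i x with
  | nil => simp
  | cons b p ih =>
    cases i with
    | zero => simp
    | succ i =>
      cases b
      · cases x with
        | zero => simp at h
        | succ x => simpa [colHeight] using ih (x := x) (by simpa using h)
      · simpa [colHeight] using ih (by simpa using h)

lemma exists_countTrue_take_eq_colHeight (p : List Bool) (x : ℕ) :
    ∃ i, countFalse (p.take i) ≤ x ∧ countTrue (p.take i) = colHeight p x := by
  induction p generalizing x with
  | nil => exact ⟨0, by simp [colHeight]⟩
  | cons b p ih =>
    cases b
    · cases x with
      | zero => exact ⟨0, by simp [colHeight]⟩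
      | succ x =>
        obtain ⟨i, hf, ht⟩ := ih x
        exact ⟨i + 1, by simpa using hf, by simpa [colHeight] using ht⟩
    · obtain ⟨i, hf, ht⟩ := ih x
      exact ⟨i + 1, by simpa using hf, by simpa [colHeight] using ht⟩

lemma colHeight_le_colHeight {r g : List Bool} (hlen : r.length = g.length)
    (hdom : ∀ i, countTrue (g.take i) ≤ countTrue (r.take i)) (x : ℕ) :
    colHeight g x ≤ colHeight r x := by
  obtain ⟨i, hf, ht⟩ := exists_countTrue_take_eq_colHeight g x
  have hr := countTrue_add_countFalse (r.take i)
  have hg := countTrue_add_countFalse (g.take i)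
  simp only [List.length_take, hlen] at hr hg
  have := countTrue_take_le_colHeight r (i := i) (x := x) (by linarith [hdom i])
  linarith [hdom i]

lemma IsPolyo.isRPolyo {m n : ℕ} {r g : List Bool} (h : IsPolyo m n r g) :
    IsRPolyo m n r g := by
  obtain ⟨hr, hg, hrn, hgn, hgap⟩ := h
  refine ⟨hr, hg, hrn, hgn, fun i => ?_⟩
  rcases Nat.eq_zero_or_pos i with rfl | hi
  · simp
  rcases lt_or_ge i (m + n) with hin | hin
  · exact (hgap i hi hin).le
  · rw [List.take_of_length_le (by omega), List.take_of_length_le (by omega)]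
    omega

lemma IsRPolyo.cellArea_eq {m n : ℕ} {r g : List Bool} (h : IsRPolyo m n r g) :
    cellArea m r g = areaBelow r - areaBelow g := by
  obtain ⟨hr, hg, hrn, hgn, hdom⟩ := h
  have hrm : countFalse r = m := by have := countTrue_add_countFalse r; omega
  have hgm : countFalse g = m := by have := countTrue_add_countFalse g; omega
  rw [cellArea, sum_tsub_distrib _ fun x _ => colHeight_le_colHeight (by omega) hdom x,
    ← sum_colHeight_eq_areaBelow, ← sum_colHeight_eq_areaBelow, hrm, hgm]

lemma countTrue_take_lt_of_cons {a b : Bool} {as bs : List Bool} {d d' : ℕ}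
    (hd : d' + b.toNat = d + a.toNat)
    (hgap : ∀ i, 1 ≤ i → i < (a :: as).length →
      countTrue ((b :: bs).take i) < d + countTrue ((a :: as).take i)) :
    ∀ i, 1 ≤ i → i < as.length → countTrue (bs.take i) < d' + countTrue (as.take i) := by
  intro i hi hlt
  have := hgap (i + 1) (by omega) (by simpa using hlt)
  simp only [List.take_succ_cons, countTrue_cons] at this
  omega

section LevelsInterlace

variable (as bs : List Bool) (d : ℕ)

@[simp] lemma levels_interlace_true_true :
    levels (interlace (true :: as) (true :: bs)) (2 * d) =
      2 * d :: levels (interlace as bs) (2 * d) := rfl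

@[simp] lemma levels_interlace_true_false :
    levels (interlace (true :: as) (false :: bs)) (2 * d) =
      2 * d :: (2 * d + 1) :: levels (interlace as bs) (2 * (d + 1)) := rfl

@[simp] lemma levels_interlace_false_false :
    levels (interlace (false :: as) (false :: bs)) (2 * (d + 1)) =
      (2 * d + 1) :: levels (interlace as bs) (2 * (d + 1)) := rfl

@[simp] lemma levels_interlace_false_true :
    levels (interlace (false :: as) (true :: bs)) (2 * (d + 1)) =
      levels (interlace as bs) (2 * d) := rfl

end LevelsInterlace

@[simp] lemma wval_two_mul (d : ℕ) : wval (2 * d) = d := by simp only [wval]; omega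

@[simp] lemma wval_two_mul_add_one (d : ℕ) : wval (2 * d + 1) = d + 1 := by simp only [wval]; omega

lemma sum_wval_levels_interlace_add_areaBelow :
    ∀ (r g : List Bool) (d : ℕ), r.length = g.length → countTrue g = countTrue r + d →
    (∀ i, 1 ≤ i → i < r.length → countTrue (g.take i) < d + countTrue (r.take i)) →
    ((levels (interlace r g) (2 * d)).map wval).sum + areaBelow g = areaBelow r + d * countFalse g
  | [], g, _, hlen, _, _ => by
    obtain rfl : g = [] := List.eq_nil_of_length_eq_zero hlen.symm
    simp [interlace, levels, areaBelow]
  | _ :: _, [], _, hlen, _, _ => by simp at hlen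
  | [a], b :: bs, d, hlen, hend, _ => by
    obtain rfl : bs = [] := List.eq_nil_of_length_eq_zero (by simpa using hlen.symm)
    cases a <;> cases b <;> simp [interlace, levels, areaBelow, wval] at hend ⊢ <;> omega
  | a :: a' :: as, b :: bs, d, hlen, hend, hgap => by
    have hlen' : (a' :: as).length = bs.length := by simpa using hlen
    have hstart : b.toNat < d + a.toNat := by simpa using hgap 1 le_rfl (by simp)
    have hend' : countTrue bs + b.toNat = countTrue (a' :: as) + a.toNat + d := by
      rw [countTrue_cons, countTrue_cons] at hend; omega
    have hr := countTrue_add_countFalse (a' :: as)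
    have hg := countTrue_add_countFalse bs
    cases a <;> cases b <;> simp only [Bool.toNat_true, Bool.toNat_false] at hstart hend'
    · obtain ⟨e, rfl⟩ : ∃ e, d = e + 1 := ⟨d - 1, by omega⟩
      have ih := sum_wval_levels_interlace_add_areaBelow (a' :: as) bs (e + 1) hlen'
        (by omega) (countTrue_take_lt_of_cons (by simp) hgap)
      simp only [levels_interlace_false_false, List.map_cons, List.sum_cons, wval_two_mul_add_one,
        areaBelow, countFalse_cons _ bs, Bool.not_false, Bool.toNat_true]
      linarith
    · obtain ⟨e, rfl⟩ : ∃ e, d = e + 1 := ⟨d - 1, by omega⟩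
      have ih := sum_wval_levels_interlace_add_areaBelow (a' :: as) bs e hlen'
        (by omega) (countTrue_take_lt_of_cons (by simp) hgap)
      simp only [levels_interlace_false_true, areaBelow, countFalse_cons _ bs, Bool.not_true,
        Bool.toNat_false]
      linarith
    · have ih := sum_wval_levels_interlace_add_areaBelow (a' :: as) bs (d + 1) hlen'
        (by omega) (countTrue_take_lt_of_cons (by simp) hgap)
      simp only [levels_interlace_true_false, List.map_cons, List.sum_cons, wval_two_mul,
        wval_two_mul_add_one, areaBelow, countFalse_cons _ bs, Bool.not_false, Bool.toNat_true]
      linarith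
    · have ih := sum_wval_levels_interlace_add_areaBelow (a' :: as) bs d hlen'
        (by omega) (countTrue_take_lt_of_cons (by simp) hgap)
      simp only [levels_interlace_true_true, List.map_cons, List.sum_cons, wval_two_mul,
        areaBelow, countFalse_cons _ bs, Bool.not_true, Bool.toNat_false]
      linarith

lemma IsPolyo.sum_wval_areaWord_add_areaBelow {m n : ℕ} {r g : List Bool} (h : IsPolyo m n r g) :
    ((areaWord r g).map wval).sum + areaBelow g = areaBelow r := by
  obtain ⟨hr, hg, hrn, hgn, hgap⟩ := h
  simpa [areaWord] using sum_wval_levels_interlace_add_areaBelow r g 0 (by omega) (by omega)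
    fun i hi hin => by simpa using hgap i hi (by omega)

/-- For every `m × n` parallelogram polyomino, the number of unit squares strictly enclosed
between the red and the green boundary paths equals the sum of the values of the letters of
its area word. -/
theorem area_eq_areaWord_sum (m n : ℕ) (r g : List Bool) (h : IsPolyo m n r g) :
    cellArea m r g = ((areaWord r g).map wval).sum := by
  have := h.sum_wval_areaWord_add_areaBelow
  rw [h.isRPolyo.cellArea_eq]
  omega
end
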